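/- Let J = [0,∞) and let f : J → ℝ be differentiable on the interior of J with f' integrable on [u,v], where u, v ∈ J and 0 < u < v. Let q ≥ 1 and s ∈ (0,1]. If |f'|^q is s-convex in the second sense on [u,v], then |(v·f(v) - u·f(u))/(2(v-u)) + (1/2)·f((u+v)/2) - (1/(v-u))·∫_u^v f(μ) dμ| ≤ (1/4)·A(u,v)^{1-1/q}·(1/((s+1)(s+2)))^{1/q}·[(((s+1)u+v)·|f'((u+v)/2)|^q + ((s+1)v+u)·|f'(v)|^q)^{1/q} + (((s+1)v+u)·|f'((u+v)/2)|^q + ((s+1)u+v)·|f'(u)|^q)^{1/q}]. -/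

import Mathlib

/-!
Integrating by parts against the kernel `x - u/2` on `[u, m]` and `x - v/2` on `[m, v]`,
`m = (u + v)/2`, turns the left-hand side into `(v - u)⁻¹` times the sum of the two kernel
integrals of `f'`. The kernel is nonnegative on each half, so Hölder's inequality with the kernel as
weight bounds each integral by `(∫ K)^(1 - 1/q) (∫ K |f'|^q)^(1/q)`; s-convexity then bounds
`|f'|^q` on each half by `t^s |f'(right end)|^q + (1 - t)^s |f'(left end)|^q`, and the resulting
integrals `∫ K t^s` are elementary.
-/

open MeasureTheory Set

theorem integral_mul_le_rpow_integral_mul_rpow_integral {α : Type*} [MeasurableSpace α]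
    {μ : Measure α} {q : ℝ} (hq : 1 ≤ q) {w g : α → ℝ} (hw : 0 ≤ᵐ[μ] w) (hg : 0 ≤ᵐ[μ] g)
    (hwi : Integrable w μ) (hgm : AEMeasurable g μ)
    (hwg : Integrable (fun x => w x * g x ^ q) μ) :
    ∫ x, w x * g x ∂μ ≤ (∫ x, w x ∂μ) ^ (1 - 1 / q) * (∫ x, w x * g x ^ q ∂μ) ^ (1 / q) := by
  rcases hq.eq_or_lt with rfl | hq1
  · simp
  set p := q.conjExponent
  have hpq : p.HolderConjugate q := (Real.HolderConjugate.conjExponent hq1).symm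
  have hmemLp : ∀ {r : ℝ} {F : α → ℝ}, 0 < r → AEMeasurable F μ → 0 ≤ᵐ[μ] F →
      Integrable (fun x => F x ^ r) μ → MemLp F (ENNReal.ofReal r) μ := by
    intro r F hr hFm hF hi
    refine (integrable_norm_rpow_iff hFm.aestronglyMeasurable (by simpa using hr)
      ENNReal.ofReal_ne_top).1 ?_
    rw [ENNReal.toReal_ofReal hr.le]
    refine hi.congr ?_
    filter_upwards [hF] with x hx
    rw [Real.norm_of_nonneg hx]
  have hF_pow : ∀ᵐ x ∂μ, (w x ^ (1 / p)) ^ p = w x := by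
    filter_upwards [hw] with x hx
    rw [← Real.rpow_mul hx, one_div_mul_cancel hpq.ne_zero, Real.rpow_one]
  have hG_pow : ∀ᵐ x ∂μ, (w x ^ (1 / q) * g x) ^ q = w x * g x ^ q := by
    filter_upwards [hw, hg] with x hx hgx
    rw [Real.mul_rpow (Real.rpow_nonneg hx _) hgx, ← Real.rpow_mul hx,
      one_div_mul_cancel hpq.symm.ne_zero, Real.rpow_one]
  have hF_nonneg : 0 ≤ᵐ[μ] fun x => w x ^ (1 / p) := by
    filter_upwards [hw] with x hx using Real.rpow_nonneg hx _
  have hG_nonneg : 0 ≤ᵐ[μ] fun x => w x ^ (1 / q) * g x := by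
    filter_upwards [hw, hg] with x hx hgx using mul_nonneg (Real.rpow_nonneg hx _) hgx
  have hwm := hwi.aemeasurable
  have holder := integral_mul_le_Lp_mul_Lq_of_nonneg hpq hF_nonneg hG_nonneg
    (hmemLp hpq.pos (hwm.pow_const _) hF_nonneg (hwi.congr (hF_pow.mono fun _ h => h.symm)))
    (hmemLp hpq.symm.pos ((hwm.pow_const _).mul hgm) hG_nonneg
      (hwg.congr (hG_pow.mono fun _ h => h.symm)))
  have hFG : ∀ᵐ x ∂μ, w x ^ (1 / p) * (w x ^ (1 / q) * g x) = w x * g x := by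
    filter_upwards [hw] with x hx
    rw [← mul_assoc, ← Real.rpow_add' hx (by simp [hpq.inv_add_inv_eq_one]), one_div, one_div,
      hpq.inv_add_inv_eq_one, Real.rpow_one]
  rwa [integral_congr_ae hFG, integral_congr_ae hF_pow, integral_congr_ae hG_pow, one_div p,
    ← hpq.symm.one_sub_inv, ← one_div] at holder

theorem intervalIntegral.integral_mul_le_rpow_integral_mul_rpow_integral {a b q : ℝ}
    (hab : a ≤ b) (hq : 1 ≤ q) {w g : ℝ → ℝ} (hw : ∀ x ∈ Icc a b, 0 ≤ w x) (hg : ∀ x, 0 ≤ g x)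
    (hwi : IntervalIntegrable w volume a b) (hgm : AEMeasurable g (volume.restrict (Ioc a b)))
    (hwg : IntervalIntegrable (fun x => w x * g x ^ q) volume a b) :
    ∫ x in a..b, w x * g x ≤
      (∫ x in a..b, w x) ^ (1 - 1 / q) * (∫ x in a..b, w x * g x ^ q) ^ (1 / q) := by
  simp only [intervalIntegral.integral_of_le hab]
  exact _root_.integral_mul_le_rpow_integral_mul_rpow_integral hq
    ((ae_restrict_iff' measurableSet_Ioc).2 (ae_of_all _ fun x hx => hw x (Ioc_subset_Icc_self hx)))
    (ae_of_all _ hg) hwi.1 hgm hwg.1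

theorem IntervalIntegrable.of_nonneg_of_le {F G : ℝ → ℝ} {a b : ℝ}
    (hG : IntervalIntegrable G volume a b) (hab : a ≤ b)
    (hFm : AEStronglyMeasurable F (volume.restrict (Ioc a b)))
    (hF : ∀ x ∈ Icc a b, 0 ≤ F x) (hFG : ∀ x ∈ Icc a b, F x ≤ G x) :
    IntervalIntegrable F volume a b := by
  refine hG.mono_fun' (by rwa [uIoc_of_le hab]) ?_
  rw [uIoc_of_le hab, Filter.EventuallyLE, ae_restrict_iff' measurableSet_Ioc]
  refine ae_of_all _ fun x hx => ?_
  rw [Real.norm_of_nonneg (hF x (Ioc_subset_Icc_self hx))]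
  exact hFG x (Ioc_subset_Icc_self hx)

theorem integral_sub_const (a b c : ℝ) : ∫ x in a..b, (x - c) = (b - a) / 2 * (a + b - 2 * c) := by
  simp only [intervalIntegral.integral_sub intervalIntegral.intervalIntegrable_id
    intervalIntegrable_const, integral_id, intervalIntegral.integral_const, smul_eq_mul]
  ring

theorem mul_rpow_one_sub_mul_mul_rpow {α x y r : ℝ} (hα : 0 < α) (hx : 0 ≤ x) (hy : 0 ≤ y) :
    (α * x) ^ (1 - r) * (α * y) ^ r = α * (x ^ (1 - r) * y ^ r) := by
  rw [Real.mul_rpow hα.le hx, Real.mul_rpow hα.le hy]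
  calc α ^ (1 - r) * x ^ (1 - r) * (α ^ r * y ^ r)
      = α ^ (1 - r + r) * (x ^ (1 - r) * y ^ r) := by rw [Real.rpow_add hα]; ring
    _ = α * (x ^ (1 - r) * y ^ r) := by rw [sub_add_cancel, Real.rpow_one]

theorem integral_affine_mul_rpow_zero_one {s : ℝ} (hs : -1 < s) (α β : ℝ) :
    ∫ t in (0:ℝ)..1, (α + β * t) * t ^ s = α / (s + 1) + β / (s + 2) := by
  have hsplit : EqOn (fun t : ℝ => (α + β * t) * t ^ s) (fun t => α * t ^ s + β * t ^ (s + 1))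
      (uIcc 0 1) := by
    intro t ht
    rw [uIcc_of_le zero_le_one] at ht
    simp only [Real.rpow_add' ht.1 (by linarith : s + 1 ≠ 0), Real.rpow_one]
    ring
  rw [intervalIntegral.integral_congr hsplit, intervalIntegral.integral_add
    ((intervalIntegral.intervalIntegrable_rpow' hs).const_mul α)
    ((intervalIntegral.intervalIntegrable_rpow' (by linarith)).const_mul β),
    intervalIntegral.integral_const_mul, intervalIntegral.integral_const_mul,
    integral_rpow (.inl hs), integral_rpow (.inl (by linarith))]
  simp only [Real.one_rpow, Real.zero_rpow (by linarith : s + 1 ≠ 0),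
    Real.zero_rpow (by linarith : s + 1 + 1 ≠ 0)]
  ring

theorem integral_sub_mul_rpow_sub_left_div {a b c s : ℝ} (hab : a < b) (hs : -1 < s) :
    ∫ x in a..b, (x - c) * ((x - a) / (b - a)) ^ s
      = (b - a) * ((a - c) / (s + 1) + (b - a) / (s + 2)) := by
  have hL : b - a ≠ 0 := sub_ne_zero.2 hab.ne'
  have h := intervalIntegral.integral_comp_div_sub (a := a) (b := b)
    (fun t => ((a - c) + (b - a) * t) * t ^ s) hL (a / (b - a))
  simp only [sub_self, div_sub_div_same, div_self hL, smul_eq_mul,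
    integral_affine_mul_rpow_zero_one hs] at h
  rw [← h]
  refine intervalIntegral.integral_congr fun x _ => ?_
  field_simp
  ring

theorem integral_sub_mul_rpow_sub_right_div {a b c s : ℝ} (hab : a < b) (hs : -1 < s) :
    ∫ x in a..b, (x - c) * ((b - x) / (b - a)) ^ s
      = (b - a) * ((b - c) / (s + 1) - (b - a) / (s + 2)) := by
  have hL : b - a ≠ 0 := sub_ne_zero.2 hab.ne'
  have h := intervalIntegral.integral_comp_sub_div (a := a) (b := b)
    (fun t => ((b - c) + -(b - a) * t) * t ^ s) hL (b / (b - a))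
  simp only [sub_self, div_sub_div_same, div_self hL, smul_eq_mul,
    integral_affine_mul_rpow_zero_one hs] at h
  rw [neg_div, ← sub_eq_add_neg] at h
  rw [← h]
  refine intervalIntegral.integral_congr fun x _ => ?_
  field_simp
  ring

/-- Breckner's s-convexity in the second sense, without the requirement `0 ≤ g`. -/
def SConvexOn (s : ℝ) (S : Set ℝ) (g : ℝ → ℝ) : Prop :=
  ∀ x ∈ S, ∀ y ∈ S, ∀ t ∈ Icc (0 : ℝ) 1, g (t * x + (1 - t) * y) ≤ t ^ s * g x + (1 - t) ^ s * g y

namespace SConvexOn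

variable {s : ℝ} {S T : Set ℝ} {g : ℝ → ℝ}

theorem subset (h : SConvexOn s S g) (hTS : T ⊆ S) : SConvexOn s T g :=
  fun x hx y hy => h x (hTS hx) y (hTS hy)

theorem le_of_mem_Icc (h : SConvexOn s S g) {a b x : ℝ} (ha : a ∈ S) (hb : b ∈ S) (hab : a < b)
    (hx : x ∈ Icc a b) :
    g x ≤ ((x - a) / (b - a)) ^ s * g b + ((b - x) / (b - a)) ^ s * g a := by
  have hL : 0 < b - a := sub_pos.2 hab
  have ht : (x - a) / (b - a) ∈ Icc (0 : ℝ) 1 :=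
    ⟨div_nonneg (by linarith [hx.1]) hL.le, (div_le_one hL).2 (by linarith [hx.2])⟩
  have h1t : 1 - (x - a) / (b - a) = (b - x) / (b - a) := by
    field_simp; ring
  have hx_eq : (x - a) / (b - a) * b + (b - x) / (b - a) * a = x := by
    field_simp; ring
  have := h b hb a ha _ ht
  rwa [h1t, hx_eq] at this

end SConvexOn

theorem integral_sub_mul_sConvex_majorant {a b c s : ℝ} (hab : a < b) (hs : 0 ≤ s) (A B : ℝ) :
    ∫ x in a..b, (x - c) * (((x - a) / (b - a)) ^ s * A + ((b - x) / (b - a)) ^ s * B)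
      = (b - a) / 2 * ((((s + 1) * (2 * b - 2 * c) + (2 * a - 2 * c)) * A
        + ((s + 1) * (2 * a - 2 * c) + (2 * b - 2 * c)) * B) / ((s + 1) * (s + 2))) := by
  have hs1 : -1 < s := by linarith
  simp only [mul_add, ← mul_assoc]
  rw [intervalIntegral.integral_add, intervalIntegral.integral_mul_const,
    intervalIntegral.integral_mul_const, integral_sub_mul_rpow_sub_left_div hab hs1,
    integral_sub_mul_rpow_sub_right_div hab hs1]
  · field_simp
    ring
  all_goals
    refine Continuous.intervalIntegrable ?_ a b
    fun_prop (disch := exact fun _ => Or.inr hs)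

theorem integral_sub_mul_deriv {f f' : ℝ → ℝ} {a b : ℝ}
    (hf : ∀ x ∈ uIcc a b, HasDerivAt f (f' x) x) (hf' : IntervalIntegrable f' volume a b) (c : ℝ) :
    ∫ x in a..b, (x - c) * f' x = (b - c) * f b - (a - c) * f a - ∫ x in a..b, f x := by
  simpa using intervalIntegral.integral_mul_deriv_eq_deriv_mul
    (fun x _ => (hasDerivAt_id x).sub_const c) hf intervalIntegrable_const hf'

theorem integral_sub_half_mul_deriv_add_eq {f f' : ℝ → ℝ} {u v : ℝ} (huv : u ≤ v)
    (hf : ∀ x ∈ Icc u v, HasDerivAt f (f' x) x) (hf' : IntervalIntegrable f' volume u v) :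
    (∫ x in u..(u + v) / 2, (x - u / 2) * f' x) + ∫ x in (u + v) / 2..v, (x - v / 2) * f' x
      = (v * f v - u * f u) / 2 + (v - u) / 2 * f ((u + v) / 2) - ∫ x in u..v, f x := by
  rw [← uIcc_of_le huv] at hf
  have hm : (u + v) / 2 ∈ uIcc u v := by rw [uIcc_of_le huv]; constructor <;> linarith
  have hleft : uIcc u ((u + v) / 2) ⊆ uIcc u v := uIcc_subset_uIcc left_mem_uIcc hm
  have hright : uIcc ((u + v) / 2) v ⊆ uIcc u v := uIcc_subset_uIcc hm right_mem_uIcc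
  have hfi : IntervalIntegrable f volume u v :=
    ContinuousOn.intervalIntegrable fun x hx => (hf x hx).continuousAt.continuousWithinAt
  rw [integral_sub_mul_deriv (fun x hx => hf x (hleft hx)) (hf'.mono_set hleft),
    integral_sub_mul_deriv (fun x hx => hf x (hright hx)) (hf'.mono_set hright)]
  linear_combination -intervalIntegral.integral_add_adjacent_intervals
    (hfi.mono_set hleft) (hfi.mono_set hright)

theorem abs_integral_sub_mul_le {φ : ℝ → ℝ} {a b c q s : ℝ} (hca : c ≤ a) (hab : a < b)
    (hq : 1 ≤ q) (hs : 0 ≤ s) (hφ : IntervalIntegrable φ volume a b)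
    (hconv : SConvexOn s (Icc a b) fun x => |φ x| ^ q) :
    |∫ x in a..b, (x - c) * φ x| ≤ (b - a) / 2 * (a + b - 2 * c) ^ (1 - 1 / q) *
      (1 / ((s + 1) * (s + 2))) ^ (1 / q) *
      (((s + 1) * (2 * b - 2 * c) + (2 * a - 2 * c)) * |φ b| ^ q
        + ((s + 1) * (2 * a - 2 * c) + (2 * b - 2 * c)) * |φ a| ^ q) ^ (1 / q) := by
  set R : ℝ → ℝ := fun x => (x - c) *
    (((x - a) / (b - a)) ^ s * |φ b| ^ q + ((b - x) / (b - a)) ^ s * |φ a| ^ q)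
  have hweight : ∀ x ∈ Icc a b, 0 ≤ x - c := fun x hx => by linarith [hx.1]
  have hbound : ∀ x ∈ Icc a b, (x - c) * |φ x| ^ q ≤ R x := fun x hx =>
    mul_le_mul_of_nonneg_left
      (hconv.le_of_mem_Icc (left_mem_Icc.2 hab.le) (right_mem_Icc.2 hab.le) hab hx) (hweight x hx)
  have hR : IntervalIntegrable R volume a b := by
    refine Continuous.intervalIntegrable ?_ a b
    fun_prop (disch := exact fun _ => Or.inr hs)
  have habsm : AEMeasurable (fun x => |φ x|) (volume.restrict (Ioc a b)) :=
    continuous_abs.measurable.comp_aemeasurable hφ.1.aemeasurable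
  have hφq : IntervalIntegrable (fun x => (x - c) * |φ x| ^ q) volume a b :=
    hR.of_nonneg_of_le hab.le
      ((by fun_prop : Continuous fun x : ℝ => x - c).aestronglyMeasurable.mul
        (habsm.pow_const q).aestronglyMeasurable)
      (fun x hx => mul_nonneg (hweight x hx) (Real.rpow_nonneg (abs_nonneg _) _)) hbound
  have hY : 0 ≤ ((s + 1) * (2 * b - 2 * c) + (2 * a - 2 * c)) * |φ b| ^ q
        + ((s + 1) * (2 * a - 2 * c) + (2 * b - 2 * c)) * |φ a| ^ q := by
    have : 0 ≤ 2 * b - 2 * c := by linarith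
    have : 0 ≤ 2 * a - 2 * c := by linarith
    positivity
  calc |∫ x in a..b, (x - c) * φ x| ≤ ∫ x in a..b, (x - c) * |φ x| := by
        refine (intervalIntegral.abs_integral_le_integral_abs hab.le).trans_eq
          (intervalIntegral.integral_congr fun x hx => ?_)
        rw [uIcc_of_le hab.le] at hx
        simp only [abs_mul, abs_of_nonneg (hweight x hx)]
    _ ≤ (∫ x in a..b, (x - c)) ^ (1 - 1 / q) * (∫ x in a..b, (x - c) * |φ x| ^ q) ^ (1 / q) :=
        intervalIntegral.integral_mul_le_rpow_integral_mul_rpow_integral hab.le hq hweight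
          (fun x => abs_nonneg _)
          ((by fun_prop : Continuous fun x : ℝ => x - c).intervalIntegrable _ _) habsm hφq
    _ ≤ (∫ x in a..b, (x - c)) ^ (1 - 1 / q) * (∫ x in a..b, R x) ^ (1 / q) := by
        refine mul_le_mul_of_nonneg_left (Real.rpow_le_rpow ?_
          (intervalIntegral.integral_mono_on hab.le hφq hR hbound) (by positivity))
          (Real.rpow_nonneg (intervalIntegral.integral_nonneg hab.le hweight) _)
        exact intervalIntegral.integral_nonneg hab.le fun x hx =>
          mul_nonneg (hweight x hx) (Real.rpow_nonneg (abs_nonneg _) _)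
    _ = _ := by
        have hD : 0 ≤ 1 / ((s + 1) * (s + 2)) := by positivity
        rw [integral_sub_const, integral_sub_mul_sConvex_majorant hab hs,
          div_eq_mul_one_div _ ((s + 1) * (s + 2)),
          mul_rpow_one_sub_mul_mul_rpow (by linarith) (by linarith) (mul_nonneg hY hD),
          Real.mul_rpow hY hD]
        ring

theorem stmt_14_general (f f' : ℝ → ℝ) (u v q s : ℝ) (hu : 0 < u) (huv : u < v)
    (hq : 1 ≤ q) (hs0 : 0 < s)
    (hderiv : ∀ y ∈ interior (Set.Ici (0:ℝ)), HasDerivAt f (f' y) y)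
    (hint : IntervalIntegrable f' MeasureTheory.volume u v)
    (hsconv : ∀ a ∈ Set.Icc u v, ∀ b ∈ Set.Icc u v, ∀ t ∈ Set.Icc (0:ℝ) 1,
      |f' (t * a + (1 - t) * b)| ^ q ≤ t ^ s * |f' a| ^ q + (1 - t) ^ s * |f' b| ^ q) :
    |(v * f v - u * f u) / (2 * (v - u)) + (1 / 2) * f ((u + v) / 2)
        - (1 / (v - u)) * ∫ μ in u..v, f μ|
      ≤ (1 / 4) * ((u + v) / 2) ^ (1 - 1 / q) * (1 / ((s + 1) * (s + 2))) ^ (1 / q) *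
          ((((s + 1) * u + v) * |f' ((u + v) / 2)| ^ q
              + ((s + 1) * v + u) * |f' v| ^ q) ^ (1 / q)
            + (((s + 1) * v + u) * |f' ((u + v) / 2)| ^ q
              + ((s + 1) * u + v) * |f' u| ^ q) ^ (1 / q)) := by
  have hum : u < (u + v) / 2 := by linarith
  have hmv : (u + v) / 2 < v := by linarith
  have hf : ∀ x ∈ Icc u v, HasDerivAt f (f' x) x := fun x hx =>
    hderiv x (by rw [interior_Ici]; exact hu.trans_le hx.1)
  have hm : (u + v) / 2 ∈ uIcc u v := by rw [uIcc_of_le huv.le]; exact ⟨hum.le, hmv.le⟩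
  have hconv : SConvexOn s (Icc u v) fun x => |f' x| ^ q := hsconv
  have hleft := abs_integral_sub_mul_le (c := u / 2) (by linarith) hum hq hs0.le
    (hint.mono_set (uIcc_subset_uIcc left_mem_uIcc hm)) (hconv.subset (Icc_subset_Icc_right hmv.le))
  have hright := abs_integral_sub_mul_le (c := v / 2) (by linarith) hmv hq hs0.le
    (hint.mono_set (uIcc_subset_uIcc hm right_mem_uIcc)) (hconv.subset (Icc_subset_Icc_left hum.le))
  have hLHS : (v * f v - u * f u) / (2 * (v - u)) + (1 / 2) * f ((u + v) / 2)
      - (1 / (v - u)) * ∫ μ in u..v, f μ = ((∫ x in u..(u + v) / 2, (x - u / 2) * f' x)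
        + ∫ x in (u + v) / 2..v, (x - v / 2) * f' x) / (v - u) := by
    rw [integral_sub_half_mul_deriv_add_eq huv.le hf hint]
    field_simp [(sub_pos.2 huv).ne']
  rw [hLHS, abs_div, abs_of_pos (sub_pos.2 huv), div_le_iff₀ (sub_pos.2 huv)]
  refine (abs_add_le _ _).trans ((add_le_add hleft hright).trans_eq ?_)
  rw [show u + (u + v) / 2 - 2 * (u / 2) = (u + v) / 2 by ring,
    show (u + v) / 2 + v - 2 * (v / 2) = (u + v) / 2 by ring,
    show (s + 1) * (2 * ((u + v) / 2) - 2 * (u / 2)) + (2 * u - 2 * (u / 2))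
      = (s + 1) * v + u by ring,
    show (s + 1) * (2 * u - 2 * (u / 2)) + (2 * ((u + v) / 2) - 2 * (u / 2))
      = (s + 1) * u + v by ring,
    show (s + 1) * (2 * v - 2 * (v / 2)) + (2 * ((u + v) / 2) - 2 * (v / 2))
      = (s + 1) * v + u by ring,
    show (s + 1) * (2 * ((u + v) / 2) - 2 * (v / 2)) + (2 * v - 2 * (v / 2))
      = (s + 1) * u + v by ring]
  rw [add_comm (((s + 1) * v + u) * |f' v| ^ q)]
  ring

theorem stmt_14 (f f' : ℝ → ℝ) (u v q s : ℝ) (hu : 0 < u) (huv : u < v)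
    (hq : 1 ≤ q) (hs0 : 0 < s) (hs1 : s ≤ 1)
    (hderiv : ∀ y ∈ interior (Set.Ici (0:ℝ)), HasDerivAt f (f' y) y)
    (hint : IntervalIntegrable f' MeasureTheory.volume u v)
    (hsconv : ∀ a ∈ Set.Icc u v, ∀ b ∈ Set.Icc u v, ∀ t ∈ Set.Icc (0:ℝ) 1,
      |f' (t * a + (1 - t) * b)| ^ q ≤ t ^ s * |f' a| ^ q + (1 - t) ^ s * |f' b| ^ q) :
    |(v * f v - u * f u) / (2 * (v - u)) + (1 / 2) * f ((u + v) / 2)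
        - (1 / (v - u)) * ∫ μ in u..v, f μ|
      ≤ (1 / 4) * ((u + v) / 2) ^ (1 - 1 / q) * (1 / ((s + 1) * (s + 2))) ^ (1 / q) *
          ((((s + 1) * u + v) * |f' ((u + v) / 2)| ^ q
              + ((s + 1) * v + u) * |f' v| ^ q) ^ (1 / q)
            + (((s + 1) * v + u) * |f' ((u + v) / 2)| ^ q
              + ((s + 1) * u + v) * |f' u| ^ q) ^ (1 / q)) :=
  stmt_14_general f f' u v q s hu huv hq hs0 hderiv hint hsconv
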